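/- For every integer m ≥ 3, the bipartite achievement number of the star satisfies ba(K_{1,m}) ≥ m + 1; that is, Alice has no winning strategy in the achievement game (K_{1,m}, K_{m,m}, +). -/

import Mathlib

namespace AchievementGame

/-- A strategy for the achievement game: given the history of all moves played so far
(earliest first), produce the next move (an edge, i.e. an element of `Sym2`). -/
def Strategy (α : Type*) : Type _ := List (Sym2 α) → Sym2 α

/-- A strategy is valid for the host graph `G` if, whenever some edge of `G` is still
uncolored, it chooses an uncolored edge of `G`. -/
def Strategy.Valid {α : Type*} (G : SimpleGraph α) (s : Strategy α) : Prop :=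
  ∀ l : List (Sym2 α), (∃ e ∈ G.edgeSet, e ∉ l) → s l ∈ G.edgeSet ∧ s l ∉ l

/-- The history of the first `n` moves when Alice plays strategy `σ` and Bob plays
strategy `τ`; Alice moves first and the players alternate. -/
def hist {α : Type*} (σ τ : Strategy α) : ℕ → List (Sym2 α)
  | 0 => []
  | n + 1 => hist σ τ n ++ [(if n % 2 = 0 then σ else τ) (hist σ τ n)]

/-- The `n`-th move (0-indexed): even indices are Alice's (blue) moves,
odd indices are Bob's (red) moves. -/
def move {α : Type*} (σ τ : Strategy α) (n : ℕ) : Sym2 α :=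
  (if n % 2 = 0 then σ else τ) (hist σ τ n)

/-- The set `s` of edges contains a copy of the graph `F`. -/
def HasCopy {α β : Type*} (F : SimpleGraph β) (s : Set (Sym2 α)) : Prop :=
  ∃ f : β ↪ α, ∀ a b, F.Adj a b → s(f a, f b) ∈ s

/-- Alice has a winning strategy in the achievement game `(F, G, +)`: Alice has a valid
strategy such that against every valid strategy of Bob, at some legal move of Alice
(her `(k+1)`-st move, which exists since `2k+1 ≤ |E(G)|`) the blue edges contain a copy
of `F`, while the red edges played strictly before do not. -/
def AliceWins {α β : Type*} (F : SimpleGraph β) (G : SimpleGraph α) : Prop :=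
  ∃ σ : Strategy α, Strategy.Valid G σ ∧ ∀ τ : Strategy α, Strategy.Valid G τ →
    ∃ k : ℕ, 2 * k + 1 ≤ G.edgeSet.ncard ∧
      HasCopy F {e | ∃ i ≤ k, e = move σ τ (2 * i)} ∧
      ¬ HasCopy F {e | ∃ i < k, e = move σ τ (2 * i + 1)}

/-- The matching `mK₂` consisting of `m` pairwise disjoint edges. -/
def matching (m : ℕ) : SimpleGraph (Fin m ⊕ Fin m) :=
  SimpleGraph.fromRel (fun a b => ∃ i, a = Sum.inl i ∧ b = Sum.inr i)

/-- The star `K_{1,m}`: the center `0` joined to `m` leaves. -/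
def star (m : ℕ) : SimpleGraph (Fin (m + 1)) :=
  SimpleGraph.fromRel (fun a _ => a = 0)

/-- The double star `S_{m,n}`: disjoint stars `K_{1,m}` and `K_{1,n}` with an edge
joining their centers `Sum.inl 0` and `Sum.inr 0`. -/
def doubleStar (m n : ℕ) : SimpleGraph (Fin (m + 1) ⊕ Fin (n + 1)) :=
  SimpleGraph.fromRel (fun a b =>
    (a = Sum.inl 0 ∧ ∃ i, b = Sum.inl i) ∨
    (a = Sum.inr 0 ∧ ∃ j, b = Sum.inr j) ∨
    (a = Sum.inl 0 ∧ b = Sum.inr 0))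

/-- The disjoint union `K_{1,m} ∪ nK₂` of a star and a matching. -/
def starMatching (m n : ℕ) : SimpleGraph (Fin (m + 1) ⊕ (Fin n ⊕ Fin n)) :=
  SimpleGraph.fromRel (fun a b =>
    (a = Sum.inl 0 ∧ ∃ i, b = Sum.inl i) ∨
    (∃ i, a = Sum.inr (Sum.inl i) ∧ b = Sum.inr (Sum.inr i)))

end AchievementGame

open AchievementGame

/-!
A copy of `K_{1,m}` among the edges of `K_{m,m}` consists of all `m` edges at one vertex, that is,
a full row or column of the `m × m` board whose cells are the edges. So Bob only has to enter
every line before Alice fills it.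

For `m ≥ 4` he does so with a pairing strategy: the cells are paired so that every line contains
a pair, and Bob answers each move of Alice by its partner, so that Alice never owns both cells of
a pair. For `m = 3` no such pairing exists (four disjoint pairs cover at most four of the six
lines); there Bob answers with a free cell maximizing the number of Alice's cells on the lines
through it that he has not blocked yet, and an exhaustive check of Alice's at most
`9 · 7 · 5 · 3 · 1` plays shows that she never completes a line.
-/

theorem Function.Involutive.extend {β γ : Type*} {f : β → γ} (hf : Function.Injective f)
    {g : β → β} (hg : Function.Involutive g) :
    Function.Involutive (Function.extend f (f ∘ g) id) := by
  intro c
  by_cases hc : ∃ b, f b = c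
  · obtain ⟨b, rfl⟩ := hc
    simp [hf.extend_apply, hg b]
  · rw [Function.extend_apply' _ _ _ hc, id, Function.extend_apply' _ _ _ hc, id]

namespace AchievementGame

variable {α : Type*}

section Play

variable (σ τ : Strategy α)

theorem hist_succ (n : ℕ) : hist σ τ (n + 1) = hist σ τ n ++ [move σ τ n] := rfl

theorem length_hist (n : ℕ) : (hist σ τ n).length = n := by
  induction n with
  | zero => rfl
  | succ n ih => simp [hist_succ, ih]

theorem mem_hist {e : Sym2 α} {n : ℕ} : e ∈ hist σ τ n ↔ ∃ i < n, move σ τ i = e := by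
  induction n with
  | zero => simp [hist]
  | succ n ih =>
    simp [hist_succ, ih, Nat.le_iff_lt_or_eq, or_and_right, exists_or, eq_comm]

theorem move_two_mul_add_one (i : ℕ) : move σ τ (2 * i + 1) = τ (hist σ τ (2 * i + 1)) := by
  simp [move]

theorem exists_mem_edgeSet_notMem {G : SimpleGraph α} {l : List (Sym2 α)}
    (h : l.length < G.edgeSet.ncard) : ∃ e ∈ G.edgeSet, e ∉ l := by
  classical
  by_contra! hl
  have hsub : G.edgeSet ⊆ ↑l.toFinset := fun e he => by simpa using hl e he
  have := (Set.ncard_le_ncard hsub (Finset.finite_toSet _)).trans_eq (Set.ncard_coe_finset _)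
  exact (this.trans l.toFinset_card_le).not_gt h

variable {G : SimpleGraph α} {σ τ} (hσ : σ.Valid G) (hτ : τ.Valid G)
include hσ hτ

theorem move_mem_edgeSet_and_notMem_hist {n : ℕ} (hn : n < G.edgeSet.ncard) :
    move σ τ n ∈ G.edgeSet ∧ move σ τ n ∉ hist σ τ n := by
  have hfree := exists_mem_edgeSet_notMem (G := G) ((length_hist σ τ n).trans_lt hn)
  unfold move
  split
  · exact hσ _ hfree
  · exact hτ _ hfree

theorem mem_edgeSet_of_mem_hist {n : ℕ} (hn : n ≤ G.edgeSet.ncard) {e : Sym2 α}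
    (he : e ∈ hist σ τ n) : e ∈ G.edgeSet := by
  obtain ⟨i, hi, rfl⟩ := (mem_hist σ τ).1 he
  exact (move_mem_edgeSet_and_notMem_hist hσ hτ (by omega)).1

theorem move_ne_move {i j : ℕ} (hij : i < j) (hj : j < G.edgeSet.ncard) :
    move σ τ i ≠ move σ τ j := fun h =>
  (move_mem_edgeSet_and_notMem_hist hσ hτ hj).2 ((mem_hist σ τ).2 ⟨i, hij, h⟩)

end Play

open Classical in
noncomputable def Strategy.legalize (G : SimpleGraph α) (s : Strategy α) : Strategy α := fun l =>
  if s l ∈ G.edgeSet ∧ s l ∉ l then s l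
  else if h : ∃ e ∈ G.edgeSet, e ∉ l then h.choose else s l

theorem Strategy.valid_legalize (G : SimpleGraph α) (s : Strategy α) :
    (s.legalize G).Valid G := by
  intro l h
  unfold legalize
  split_ifs with hs
  · exact hs
  · exact h.choose_spec

theorem Strategy.legalize_of_mem {G : SimpleGraph α} {s : Strategy α} {l : List (Sym2 α)}
    (h : s l ∈ G.edgeSet) (h' : s l ∉ l) : s.legalize G l = s l := by
  unfold legalize
  rw [if_pos ⟨h, h'⟩]

theorem star_adj_zero_succ {m : ℕ} (x : Fin m) : (star m).Adj 0 x.succ := by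
  simp [star, (Fin.succ_ne_zero x).symm]

theorem HasCopy.exists_forall_adj_mem_of_star [Finite α] {G : SimpleGraph α} {S : Set (Sym2 α)}
    {m : ℕ} (h : HasCopy (star m) S) (hS : S ⊆ G.edgeSet)
    (hdeg : ∀ v, (G.neighborSet v).ncard ≤ m) : ∃ v, ∀ w, G.Adj v w → s(v, w) ∈ S := by
  obtain ⟨f, hf⟩ := h
  have hleaf (x : Fin m) : s(f 0, f x.succ) ∈ S := hf 0 x.succ (star_adj_zero_succ x)
  have hleaves : Set.range (fun x : Fin m => f x.succ) ⊆ G.neighborSet (f 0) := by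
    rintro _ ⟨x, rfl⟩
    exact hS (hleaf x)
  have hcard : (Set.range fun x : Fin m => f x.succ).ncard = m := by
    rw [Set.ncard_range_of_injective (f := fun x : Fin m => f x.succ)
      (f.injective.comp (Fin.succ_injective _)), Nat.card_fin]
  have hall := Set.eq_of_subset_of_ncard_le hleaves (by rw [hcard]; exact hdeg _)
  refine ⟨f 0, fun w hw => ?_⟩
  obtain ⟨x, rfl⟩ : w ∈ Set.range fun x : Fin m => f x.succ := hall ▸ hw
  exact hleaf x

theorem not_aliceWins_star_of_forall_exists_adj [Finite α] {G : SimpleGraph α} {m : ℕ}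
    (hdeg : ∀ v, (G.neighborSet v).ncard ≤ m) {τ : Strategy α} (hτ : τ.Valid G)
    (hblock : ∀ σ : Strategy α, σ.Valid G → ∀ k, 2 * k + 1 ≤ G.edgeSet.ncard →
      ∀ v, ∃ w, G.Adj v w ∧ ∀ i ≤ k, move σ τ (2 * i) ≠ s(v, w)) :
    ¬ AliceWins (star m) G := by
  rintro ⟨σ, hσ, hwin⟩
  obtain ⟨k, hk, hcopy, -⟩ := hwin τ hτ
  have hblue : {e | ∃ i ≤ k, e = move σ τ (2 * i)} ⊆ G.edgeSet := by
    rintro _ ⟨i, hi, rfl⟩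
    exact (move_mem_edgeSet_and_notMem_hist hσ hτ (by omega)).1
  obtain ⟨v, hv⟩ := hcopy.exists_forall_adj_mem_of_star hblue hdeg
  obtain ⟨w, hvw, hw⟩ := hblock σ hσ k hk v
  obtain ⟨i, hi, he⟩ := hv w hvw
  exact hw i hi he.symm

section Pairing

variable [Inhabited α]

noncomputable def pairingStrategy (G : SimpleGraph α) (p : Sym2 α → Sym2 α) : Strategy α :=
  Strategy.legalize G fun l => p (l.getLastD default)

variable {G : SimpleGraph α} {p : Sym2 α → Sym2 α} (hp : Function.Involutive p)
  (hpG : ∀ e ∈ G.edgeSet, p e ∈ G.edgeSet) {σ : Strategy α} (hσ : σ.Valid G)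
include hp hpG hσ

theorem exists_move_eq_partner_of_pairingStrategy {i : ℕ} (hi : 2 * i + 1 < G.edgeSet.ncard)
    (hfix : p (move σ (pairingStrategy G p) (2 * i)) ≠ move σ (pairingStrategy G p) (2 * i)) :
    ∃ j ≤ i,
      move σ (pairingStrategy G p) (2 * j + 1) = p (move σ (pairingStrategy G p) (2 * i)) := by
  set τ := pairingStrategy G p
  have hτ : τ.Valid G := Strategy.valid_legalize _ _
  induction i using Nat.strong_induction_on with
  | _ i ih =>
  by_cases hplayed : p (move σ τ (2 * i)) ∈ hist σ τ (2 * i + 1)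
  · obtain ⟨t, ht, hmove⟩ := (mem_hist σ τ).1 hplayed
    obtain ⟨j, rfl | rfl⟩ := Nat.even_or_odd' t
    · -- Alice took the partner at a move `2 * j < 2 * i`, and by induction Bob answered it with
      -- `move (2 * i)`, which was therefore not free.
      have hji : j < i := lt_of_le_of_ne (by omega) (by rintro rfl; exact hfix hmove.symm)
      obtain ⟨j', hj', hanswer⟩ := ih j hji (by omega) (by rw [hmove, hp]; exact Ne.symm hfix)
      rw [hmove, hp] at hanswer
      exact absurd hanswer (move_ne_move hσ hτ (by omega) (by omega))
    · exact ⟨j, by omega, hmove⟩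
  · refine ⟨i, le_rfl, ?_⟩
    have he := (move_mem_edgeSet_and_notMem_hist hσ hτ (n := 2 * i) (by omega)).1
    rw [move_two_mul_add_one]
    have hlast : (hist σ τ (2 * i + 1)).getLastD default = move σ τ (2 * i) := by
      simp [hist_succ]
    refine (Strategy.legalize_of_mem ?_ ?_).trans ?_ <;> simp only [hlast]
    · exact hpG _ he
    · exact hplayed

theorem move_ne_partner_of_pairingStrategy {i j : ℕ} (hij : i < j) (hj : 2 * j < G.edgeSet.ncard)
    (hfix : p (move σ (pairingStrategy G p) (2 * i)) ≠ move σ (pairingStrategy G p) (2 * i)) :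
    move σ (pairingStrategy G p) (2 * j) ≠ p (move σ (pairingStrategy G p) (2 * i)) := by
  obtain ⟨j', hj', hanswer⟩ :=
    exists_move_eq_partner_of_pairingStrategy hp hpG hσ (by omega) hfix
  rw [← hanswer]
  exact (move_ne_move hσ (Strategy.valid_legalize _ _) (by omega) hj).symm

theorem partner_eq_of_pairingStrategy {i j : ℕ} (hi : 2 * i < G.edgeSet.ncard)
    (hj : 2 * j < G.edgeSet.ncard)
    (hpair : move σ (pairingStrategy G p) (2 * j) = p (move σ (pairingStrategy G p) (2 * i))) :
    p (move σ (pairingStrategy G p) (2 * i)) = move σ (pairingStrategy G p) (2 * i) := by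
  by_contra hfix
  rcases lt_trichotomy i j with hij | rfl | hji
  · exact move_ne_partner_of_pairingStrategy hp hpG hσ hij hj hfix hpair
  · exact hfix hpair.symm
  · refine move_ne_partner_of_pairingStrategy hp hpG hσ hji hi ?_ ?_
    · rw [hpair, hp]
      exact Ne.symm hfix
    · rw [hpair, hp]

omit hσ in
theorem not_aliceWins_star_of_pairing [Finite α] {m : ℕ}
    (hdeg : ∀ v, (G.neighborSet v).ncard ≤ m)
    (hpair : ∀ v, ∃ w w', G.Adj v w ∧ G.Adj v w' ∧ w ≠ w' ∧ p s(v, w) = s(v, w')) :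
    ¬ AliceWins (star m) G := by
  refine not_aliceWins_star_of_forall_exists_adj hdeg (τ := pairingStrategy G p)
    (Strategy.valid_legalize _ _)
    fun σ hσ k hk v => ?_
  obtain ⟨w, w', hw, hw', hne, hpw⟩ := hpair v
  by_contra! hblue
  obtain ⟨i, hi, hmove⟩ := hblue w hw
  obtain ⟨j, hj, hmove'⟩ := hblue w' hw'
  have hfix := partner_eq_of_pairingStrategy hp hpG hσ (i := i) (j := j) (by omega) (by omega)
    (by rw [hmove, hmove', hpw])
  rw [hmove, hpw] at hfix
  exact hne (Sym2.congr_right.1 hfix).symm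

end Pairing

section CompleteBipartite

variable {V W : Type*}

theorem ncard_neighborSet_completeBipartiteGraph [Finite W] (v : W ⊕ W) :
    ((completeBipartiteGraph W W).neighborSet v).ncard = Nat.card W := by
  rcases v with u | u
  · have : (completeBipartiteGraph W W).neighborSet (.inl u) = Set.range Sum.inr := by
      ext (w | w) <;> simp
    rw [this, Set.ncard_range_of_injective Sum.inr_injective]
  · have : (completeBipartiteGraph W W).neighborSet (.inr u) = Set.range Sum.inl := by
      ext (w | w) <;> simp
    rw [this, Set.ncard_range_of_injective Sum.inl_injective]

def cellEdge (c : V × W) : Sym2 (V ⊕ W) := s(.inl c.1, .inr c.2)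

theorem cellEdge_injective : Function.Injective (cellEdge (V := V) (W := W)) := by
  rintro ⟨i, j⟩ ⟨i', j'⟩ h
  simpa [cellEdge] using h

theorem range_cellEdge : Set.range (cellEdge (V := V) (W := W)) =
    (completeBipartiteGraph V W).edgeSet :=
  SimpleGraph.edgeSet_completeBipartiteGraph.symm

theorem ncard_edgeSet_completeBipartiteGraph [Finite V] [Finite W] :
    (completeBipartiteGraph V W).edgeSet.ncard = Nat.card V * Nat.card W := by
  rw [← range_cellEdge, Set.ncard_range_of_injective cellEdge_injective, Nat.card_prod]

variable [Nonempty V] [Nonempty W]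

noncomputable def edgeCell : Sym2 (V ⊕ W) → V × W := Function.invFun cellEdge

theorem edgeCell_cellEdge (c : V × W) : edgeCell (cellEdge c) = c :=
  Function.leftInverse_invFun cellEdge_injective c

theorem cellEdge_edgeCell {e : Sym2 (V ⊕ W)} (he : e ∈ (completeBipartiteGraph V W).edgeSet) :
    cellEdge (edgeCell e) = e :=
  Function.invFun_eq (range_cellEdge.symm ▸ he :)

theorem edgeCell_notMem_map {l : List (Sym2 (V ⊕ W))}
    (hl : ∀ e ∈ l, e ∈ (completeBipartiteGraph V W).edgeSet) {e : Sym2 (V ⊕ W)}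
    (he : e ∈ (completeBipartiteGraph V W).edgeSet) (hel : e ∉ l) :
    edgeCell e ∉ l.map edgeCell := by
  intro hmem
  obtain ⟨e', he', heq⟩ := List.mem_map.1 hmem
  rw [← cellEdge_edgeCell (hl e' he'), heq, cellEdge_edgeCell he] at he'
  exact hel he'

end CompleteBipartite

section FourLeM

variable {m : ℕ} (hm : 4 ≤ m)

def swapLowPairs (x : Fin m) : Fin m :=
  ⟨if x.val < 4 then (if x.val % 2 = 0 then x.val + 1 else x.val - 1) else x.val, by
    split_ifs <;> omega⟩

include hm

theorem swapLowPairs_involutive : Function.Involutive (swapLowPairs hm) := by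
  intro x
  ext
  simp only [swapLowPairs]
  split_ifs <;> omega

theorem swapLowPairs_lt_two_iff (x : Fin m) : (swapLowPairs hm x).val < 2 ↔ x.val < 2 := by
  simp only [swapLowPairs]
  split_ifs <;> omega

theorem swapLowPairs_ne (x : Fin m) (hx : x.val < 4) : swapLowPairs hm x ≠ x := by
  rw [Ne, Fin.ext_iff]
  simp only [swapLowPairs]
  split_ifs <;> omega

/-- Row `i` contains the pair in columns `0, 1` if `i < 2` and in columns `2, 3` otherwise;
column `j` contains the pair in rows `2, 3` if `j < 2` and in rows `0, 1` otherwise. -/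
def pairCell (c : Fin m × Fin m) : Fin m × Fin m :=
  if (c.1.val < 2 ↔ c.2.val < 2) then (c.1, swapLowPairs hm c.2) else (swapLowPairs hm c.1, c.2)

theorem pairCell_involutive : Function.Involutive (pairCell hm) := by
  rintro ⟨i, j⟩
  by_cases h : (i.val < 2 ↔ j.val < 2)
  · have h' : i.val < 2 ↔ (swapLowPairs hm j).val < 2 := by rwa [swapLowPairs_lt_two_iff]
    simp only [pairCell, if_pos h, if_pos h', swapLowPairs_involutive hm j]
  · have h' : ¬((swapLowPairs hm i).val < 2 ↔ j.val < 2) := by rwa [swapLowPairs_lt_two_iff]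
    simp only [pairCell, if_neg h, if_neg h', swapLowPairs_involutive hm i]

theorem exists_pairCell_eq_row (i : Fin m) :
    ∃ j, pairCell hm (i, j) = (i, swapLowPairs hm j) ∧ swapLowPairs hm j ≠ j := by
  refine ⟨⟨if i.val < 2 then 0 else 2, by split_ifs <;> omega⟩, if_pos ?_,
    swapLowPairs_ne hm _ ?_⟩
  all_goals dsimp only; split_ifs <;> omega

theorem exists_pairCell_eq_col (j : Fin m) :
    ∃ i, pairCell hm (i, j) = (swapLowPairs hm i, j) ∧ swapLowPairs hm i ≠ i := by
  refine ⟨⟨if j.val < 2 then 2 else 0, by split_ifs <;> omega⟩, if_neg ?_,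
    swapLowPairs_ne hm _ ?_⟩
  all_goals dsimp only; split_ifs <;> omega

theorem not_aliceWins_star_completeBipartiteGraph_of_four_le :
    ¬ AliceWins (star m) (completeBipartiteGraph (Fin m) (Fin m)) := by
  have : NeZero m := ⟨by omega⟩
  let p := Function.extend cellEdge (cellEdge ∘ pairCell hm) id
  have hp (c : Fin m × Fin m) : p (cellEdge c) = cellEdge (pairCell hm c) :=
    cellEdge_injective.extend_apply _ _ c
  refine not_aliceWins_star_of_pairing (p := p)
    ((pairCell_involutive hm).extend cellEdge_injective) ?_
    (fun v => (ncard_neighborSet_completeBipartiteGraph v).trans_le (Nat.card_fin m).le) ?_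
  · rw [← range_cellEdge]
    rintro _ ⟨c, rfl⟩
    exact ⟨_, (hp c).symm⟩
  · rintro (i | j)
    · obtain ⟨j, hpair, hne⟩ := exists_pairCell_eq_row hm i
      refine ⟨.inr j, .inr (swapLowPairs hm j), by simp, by simp, by simpa using hne.symm, ?_⟩
      exact (hp (i, j)).trans (congrArg cellEdge hpair)
    · obtain ⟨i, hpair, hne⟩ := exists_pairCell_eq_col hm j
      refine ⟨.inl i, .inl (swapLowPairs hm i), by simp, by simp, by simpa using hne.symm, ?_⟩
      rw [Sym2.eq_swap, Sym2.eq_swap (a := Sum.inr j)]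
      exact (hp (i, j)).trans (congrArg cellEdge hpair)

end FourLeM

section Turns

variable {β : Type*}

/-- The moves of the first and of the second player in a history of alternating moves. -/
def splitTurns : List β → List β × List β
  | [] => ([], [])
  | a :: l => (a :: (splitTurns l).2, (splitTurns l).1)

theorem splitTurns_map {γ : Type*} (f : β → γ) (l : List β) :
    splitTurns (l.map f) = ((splitTurns l).1.map f, (splitTurns l).2.map f) := by
  induction l with
  | nil => rfl
  | cons a l ih => simp [splitTurns, ih]

theorem splitTurns_concat (l : List β) (a : β) :
    splitTurns (l ++ [a]) = if Even l.length then ((splitTurns l).1 ++ [a], (splitTurns l).2)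
      else ((splitTurns l).1, (splitTurns l).2 ++ [a]) := by
  induction l with
  | nil => simp [splitTurns]
  | cons b l ih =>
    simp only [List.cons_append, splitTurns, ih, List.length_cons, Nat.even_add_one]
    split_ifs <;> rfl

theorem move_mem_splitTurns_hist (σ τ : Strategy α) {i n : ℕ} (h : 2 * i < n) :
    move σ τ (2 * i) ∈ (splitTurns (hist σ τ n)).1 := by
  induction n with
  | zero => omega
  | succ n ih =>
    rw [hist_succ, splitTurns_concat, length_hist]
    rcases (show 2 * i < n ∨ 2 * i = n by omega) with h | rfl
    · split_ifs <;> simp [ih h]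
    · simp

end Turns

section ThreeByThree

def HasFullLine (s : List (Fin 3 × Fin 3)) : Prop :=
  ∃ u, (∀ j, (u, j) ∈ s) ∨ ∀ i, (i, u) ∈ s

instance : DecidablePred HasFullLine := fun s => by unfold HasFullLine; infer_instance

def boardCells : List (Fin 3 × Fin 3) := List.finRange 3 ×ˢ List.finRange 3

theorem mem_boardCells (c : Fin 3 × Fin 3) : c ∈ boardCells :=
  List.pair_mem_product.2 ⟨List.mem_finRange _, List.mem_finRange _⟩

def lineThreat (blue red : List (Fin 3 × Fin 3)) (onLine : Fin 3 × Fin 3 → Bool) : ℕ :=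
  if red.any onLine then 0 else blue.countP onLine

def greedyScore (l : List (Fin 3 × Fin 3)) (c : Fin 3 × Fin 3) : ℕ :=
  lineThreat (splitTurns l).1 (splitTurns l).2 (·.1 == c.1) +
    lineThreat (splitTurns l).1 (splitTurns l).2 (·.2 == c.2)

def greedyReply (l : List (Fin 3 × Fin 3)) : Fin 3 × Fin 3 :=
  ((boardCells.filter (· ∉ l)).argmax (greedyScore l)).getD (0, 0)

/-- From the history `l`, with Alice to move, her next `n` moves never give her a full line
when Bob answers with `greedyReply`. -/
def greedyBlocks : ℕ → List (Fin 3 × Fin 3) → Bool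
  | 0, _ => true
  | n + 1, l => boardCells.all fun a => decide (a ∈ l) ||
      (!decide (HasFullLine (splitTurns (l ++ [a])).1) &&
        greedyBlocks n (l ++ [a, greedyReply (l ++ [a])]))

theorem greedyBlocks_five : greedyBlocks 5 [] = true := by
  decide +kernel

theorem greedyBlocks_succ {n : ℕ} {l : List (Fin 3 × Fin 3)} (h : greedyBlocks (n + 1) l = true)
    {a : Fin 3 × Fin 3} (ha : a ∉ l) :
    ¬ HasFullLine (splitTurns (l ++ [a])).1 ∧
      greedyBlocks n (l ++ [a, greedyReply (l ++ [a])]) = true := by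
  simp only [greedyBlocks, List.all_eq_true, Bool.or_eq_true, decide_eq_true_eq, Bool.and_eq_true,
    Bool.not_eq_eq_eq_not, Bool.not_true, decide_eq_false_iff_not] at h
  exact (h a (mem_boardCells a)).resolve_left ha

theorem greedyReply_notMem {l : List (Fin 3 × Fin 3)} (h : ∃ c, c ∉ l) :
    greedyReply l ∉ l := by
  obtain ⟨c, hc⟩ := h
  have hfree : c ∈ boardCells.filter (· ∉ l) :=
    List.mem_filter.2 ⟨mem_boardCells c, by simpa using hc⟩
  unfold greedyReply
  generalize hmax : (boardCells.filter (· ∉ l)).argmax (greedyScore l) = r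
  obtain ⟨r, rfl⟩ := Option.ne_none_iff_exists'.1
    (hmax ▸ mt List.argmax_eq_none.1 (List.ne_nil_of_mem hfree))
  simpa using (List.mem_filter.1 (List.argmax_mem hmax)).2

noncomputable def greedyStrategy : Strategy (Fin 3 ⊕ Fin 3) :=
  Strategy.legalize (completeBipartiteGraph (Fin 3) (Fin 3))
    fun l => cellEdge (greedyReply (l.map (edgeCell)))

theorem ncard_edgeSet_completeBipartiteGraph_three :
    (completeBipartiteGraph (Fin 3) (Fin 3)).edgeSet.ncard = 9 := by
  rw [ncard_edgeSet_completeBipartiteGraph, Nat.card_fin]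

variable {σ : Strategy (Fin 3 ⊕ Fin 3)} (hσ : σ.Valid (completeBipartiteGraph (Fin 3) (Fin 3)))
include hσ

theorem mem_edgeSet_of_mem_hist_greedyStrategy {n : ℕ} (hn : n ≤ 9) {e : Sym2 (Fin 3 ⊕ Fin 3)}
    (he : e ∈ hist σ greedyStrategy n) :
    e ∈ (completeBipartiteGraph (Fin 3) (Fin 3)).edgeSet :=
  mem_edgeSet_of_mem_hist hσ (Strategy.valid_legalize _ _)
    (ncard_edgeSet_completeBipartiteGraph_three ▸ hn) he

theorem edgeCell_move_notMem_greedyStrategy {n : ℕ} (hn : n < 9) :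
    edgeCell (move σ greedyStrategy n) ∉
      (hist σ greedyStrategy n).map (edgeCell) :=
  have hmove := move_mem_edgeSet_and_notMem_hist hσ (Strategy.valid_legalize _ _)
    (ncard_edgeSet_completeBipartiteGraph_three ▸ hn)
  edgeCell_notMem_map (fun _ => mem_edgeSet_of_mem_hist_greedyStrategy hσ hn.le)
    hmove.1 hmove.2

theorem edgeCell_move_greedyStrategy {t : ℕ} (ht : 2 * t + 1 < 9) :
    edgeCell (move σ greedyStrategy (2 * t + 1)) =
      greedyReply ((hist σ greedyStrategy (2 * t + 1)).map (edgeCell)) := by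
  have hfree : ∃ c, c ∉ (hist σ greedyStrategy (2 * t + 1)).map (edgeCell) :=
    ⟨_, edgeCell_move_notMem_greedyStrategy hσ ht⟩
  have hreply := greedyReply_notMem hfree
  have hlegal : greedyStrategy (hist σ greedyStrategy (2 * t + 1)) =
      cellEdge (greedyReply ((hist σ greedyStrategy (2 * t + 1)).map (edgeCell))) :=
    Strategy.legalize_of_mem (by simp [cellEdge])
      fun hmem => hreply (edgeCell_cellEdge (greedyReply _) ▸ List.mem_map_of_mem hmem)
  rw [move_two_mul_add_one, hlegal, edgeCell_cellEdge]

theorem greedyBlocks_hist {t : ℕ} (ht : t ≤ 4) :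
    greedyBlocks (5 - t) ((hist σ greedyStrategy (2 * t)).map (edgeCell)) = true := by
  induction t with
  | zero => exact greedyBlocks_five
  | succ t ih =>
    have hstep := greedyBlocks_succ (n := 4 - t)
      ((show 4 - t + 1 = 5 - t by omega) ▸ ih (by omega))
      (edgeCell_move_notMem_greedyStrategy hσ (n := 2 * t) (by omega))
    rw [show 5 - (t + 1) = 4 - t by omega, show 2 * (t + 1) = 2 * t + 1 + 1 by ring, hist_succ,
      List.map_append, List.map_singleton, edgeCell_move_greedyStrategy hσ (by omega), hist_succ,
      List.map_append]
    simpa using hstep.2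

theorem not_hasFullLine_greedyStrategy {t : ℕ} (ht : t ≤ 4) :
    ¬ HasFullLine (splitTurns ((hist σ greedyStrategy (2 * t + 1)).map
      (edgeCell))).1 := by
  rw [hist_succ, List.map_append]
  exact (greedyBlocks_succ ((show 5 - t = 4 - t + 1 by omega) ▸ greedyBlocks_hist hσ ht)
    (edgeCell_move_notMem_greedyStrategy hσ (by omega))).1

omit hσ in
theorem not_aliceWins_star_completeBipartiteGraph_three :
    ¬ AliceWins (star 3) (completeBipartiteGraph (Fin 3) (Fin 3)) := by
  refine not_aliceWins_star_of_forall_exists_adj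
    (fun v => (ncard_neighborSet_completeBipartiteGraph v).trans_le (Nat.card_fin 3).le)
    (Strategy.valid_legalize _ _) (τ := greedyStrategy) fun σ hσ k hk v => ?_
  rw [ncard_edgeSet_completeBipartiteGraph_three] at hk
  have hblue (i : ℕ) (hi : i ≤ k) : edgeCell (move σ greedyStrategy (2 * i)) ∈
      (splitTurns ((hist σ greedyStrategy (2 * k + 1)).map (edgeCell))).1 := by
    rw [splitTurns_map]
    exact List.mem_map_of_mem (move_mem_splitTurns_hist _ _ (by omega))
  have hline := not_hasFullLine_greedyStrategy hσ (t := k) (by omega)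
  simp only [HasFullLine, not_exists, not_or, not_forall] at hline
  rcases v with u | u
  · obtain ⟨j, hj⟩ := (hline u).1
    refine ⟨.inr j, by simp, fun i hi hmove => hj ?_⟩
    have hcell := hblue i hi
    rwa [hmove, show s(.inl u, .inr j) = cellEdge (u, j) from rfl, edgeCell_cellEdge] at hcell
  · obtain ⟨i, hi⟩ := (hline u).2
    refine ⟨.inl i, by simp, fun t ht hmove => hi ?_⟩
    have hcell := hblue t ht
    rwa [hmove, show s(.inr u, .inl i) = cellEdge (i, u) from Sym2.eq_swap, edgeCell_cellEdge]
      at hcell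

end ThreeByThree

end AchievementGame

/-- For every integer `m ≥ 3`, the bipartite achievement number of the star satisfies
`ba(K_{1,m}) ≥ m + 1`; that is, Alice has no winning strategy in the achievement game
`(K_{1,m}, K_{m,m}, +)`. -/
theorem stmt12 (m : ℕ) (hm : 3 ≤ m) :
    ¬ AliceWins (star m) (completeBipartiteGraph (Fin m) (Fin m)) := by
  obtain rfl | hm := hm.eq_or_lt
  · exact not_aliceWins_star_completeBipartiteGraph_three
  · exact not_aliceWins_star_completeBipartiteGraph_of_four_le hm
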